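/- For every ε > 0 there exists an integer N(ε) such that for all integers m > n > N(ε), we have |1/p_n - 1/p_m| ≥ (1/6)·|1/n - 1/m|^{1+ε}, where p_k denotes the k-th prime. -/

import Mathlib

/-!
Chebyshev's lower bound `π x ≥ (x log 2 - log (x + 1)) / log x` gives `π x ≥ x ^ θ` eventually for
every `θ < 1`; applied at `x = p n`, where `π (p n) = n`, it yields `p n ≤ n ^ (1 + ε / 2)` for
large `n`. Since the primes are distinct integers, `p m ≥ p n + (m - n)`, so with `s = n ^ (ε / 2)`
  `1/p n - 1/p m ≥ (m - n) / (p n * (p n + m - n)) ≥ (m - n) / (n s * m s) = (1/n - 1/m) / n ^ ε`,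
and `n ^ (-ε) ≥ (1/n - 1/m) ^ ε`.
-/

open Real Filter

/-- `p n` is the `n`-th prime, with `p 1 = 2`. -/
noncomputable def p (n : ℕ) : ℕ := Nat.nth Nat.Prime (n - 1)

open Asymptotics

theorem eventually_rpow_le_primeCounting {θ : ℝ} (hθ : θ < 1) :
    ∀ᶠ n : ℕ in atTop, (n : ℝ) ^ θ ≤ Nat.primeCounting n := by
  have hmain : (fun x : ℝ => x ^ θ * log x) =o[atTop] id := by
    refine ((isBigO_refl (fun x : ℝ => x ^ θ) atTop).mul_isLittleO
      (isLittleO_log_rpow_atTop (sub_pos.2 hθ))).congr' .rfl ?_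
    filter_upwards [eventually_gt_atTop 0] with x hx
    rw [← rpow_add hx, add_sub_cancel, rpow_one, id]
  have hshift : (fun x : ℝ => log (x + 1)) =o[atTop] id :=
    (isLittleO_log_id_atTop.comp_tendsto (tendsto_atTop_add_const_right _ 1 tendsto_id)).trans_isBigO
      ((isBigO_refl _ _).add (isLittleO_const_id_atTop 1).isBigO)
  filter_upwards [((hmain.add hshift).comp_tendsto tendsto_natCast_atTop_atTop).bound
    (log_pos one_lt_two), eventually_gt_atTop 1] with n hn hn1
  refine le_trans ?_ (Chebyshev.pi_ge n)
  rw [le_div_iff₀ (log_pos (by exact_mod_cast hn1))]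
  simp only [Function.comp, id, Real.norm_eq_abs, Nat.abs_cast] at hn
  linarith [le_abs_self ((n : ℝ) ^ θ * log n + log (n + 1))]

theorem primeCounting_p {n : ℕ} (hn : 1 ≤ n) : Nat.primeCounting (p n) = n := by
  simp only [Nat.primeCounting, Nat.primeCounting', p,
    Nat.count_nth_succ_of_infinite Nat.infinite_setOfPred_prime]
  omega

theorem self_le_p (n : ℕ) : n ≤ p n := by
  have := Nat.add_two_le_nth_prime (n - 1)
  rw [p]
  omega

theorem p_add_sub_le {n m : ℕ} (hn : 1 ≤ n) (hnm : n ≤ m) : p n + (m - n) ≤ p m := by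
  have := (Nat.nth_strictMono Nat.infinite_setOfPred_prime).add_le_nat (m - n) (n - 1)
  rw [show m - n + (n - 1) = m - 1 by omega, add_comm] at this
  exact this

theorem eventually_p_le_rpow {δ : ℝ} (hδ : 0 < δ) :
    ∀ᶠ n : ℕ in atTop, (p n : ℝ) ≤ (n : ℝ) ^ (1 + δ) := by
  have hp : Tendsto p atTop atTop := tendsto_atTop_mono self_le_p tendsto_id
  have hθ : (1 + δ)⁻¹ < 1 := inv_lt_one_of_one_lt₀ (by linarith)
  filter_upwards [hp.eventually (eventually_rpow_le_primeCounting hθ), eventually_ge_atTop 1]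
    with n hn hn1
  rw [primeCounting_p hn1] at hn
  exact (rpow_inv_le_iff_of_pos (Nat.cast_nonneg _) (Nat.cast_nonneg _) (by linarith)).1 hn

theorem div_sq_le_one_div_sub_one_div {a b s A B : ℝ} (ha : 0 < a) (hab : a < b) (hs : 1 ≤ s)
    (hA : 0 < A) (hAa : A ≤ a * s) (hB : A + (b - a) ≤ B) :
    (1 / a - 1 / b) / s ^ 2 ≤ 1 / A - 1 / B := by
  have hb : 0 < b := ha.trans hab
  have hAb : A + (b - a) ≤ b * s := by nlinarith
  calc (1 / a - 1 / b) / s ^ 2 = (b - a) / ((a * s) * (b * s)) := by field_simp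
    _ ≤ (b - a) / (A * (A + (b - a))) := by
        gcongr
    _ = 1 / A - 1 / (A + (b - a)) := by
        rw [div_sub_div _ _ hA.ne' (by linarith)]; ring_nf
    _ ≤ 1 / A - 1 / B := by gcongr

theorem rpow_one_div_sub_one_div_le {a b A B ε : ℝ} (hε : 0 ≤ ε) (ha : 1 ≤ a) (hab : a < b)
    (hA : 0 < A) (hAa : A ≤ a ^ (1 + ε / 2)) (hB : A + (b - a) ≤ B) :
    (1 / a - 1 / b) ^ (1 + ε) ≤ 1 / A - 1 / B := by
  have ha0 : 0 < a := by linarith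
  set x := 1 / a - 1 / b
  have hx : 0 < x := sub_pos.2 (by gcongr)
  have hxa : x ≤ 1 / a := by simp only [x]; linarith [one_div_pos.2 (ha0.trans hab)]
  have hsq : (a ^ (ε / 2)) ^ 2 = a ^ ε := by rw [← rpow_natCast, ← rpow_mul ha0.le]; norm_num
  calc x ^ (1 + ε) = x * x ^ ε := by rw [rpow_add hx, rpow_one]
    _ ≤ x * (1 / a) ^ ε := by gcongr
    _ = x / (a ^ (ε / 2)) ^ 2 := by rw [hsq, div_rpow zero_le_one ha0.le, one_rpow, mul_one_div]
    _ ≤ 1 / A - 1 / B := by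
        refine div_sq_le_one_div_sub_one_div ha0 hab (one_le_rpow ha (by linarith)) hA ?_ hB
        rwa [rpow_add ha0, rpow_one] at hAa

theorem stmt_0 :
    ∀ ε : ℝ, 0 < ε → ∃ N : ℕ, ∀ m n : ℕ, N < n → n < m →
      |(1 : ℝ) / p n - 1 / p m| ≥ (1 / 6) * |(1 : ℝ) / n - 1 / m| ^ (1 + ε) := by
  intro ε hε
  obtain ⟨N, hN⟩ := (eventually_p_le_rpow (half_pos hε)).exists_forall_of_atTop
  refine ⟨N, fun m n hNn hnm => ?_⟩
  have hn : 1 ≤ n := by omega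
  have hgap : (p n : ℝ) + (m - n) ≤ p m := by
    rw [← Nat.cast_sub hnm.le]; exact_mod_cast p_add_sub_le hn hnm.le
  have key := rpow_one_div_sub_one_div_le hε.le (by exact_mod_cast hn) (by exact_mod_cast hnm)
    (by exact_mod_cast hn.trans (self_le_p n)) (hN n hNn.le) hgap
  have hx : 0 < (1 : ℝ) / n - 1 / m := sub_pos.2 (by gcongr)
  rw [abs_of_pos hx, ge_iff_le]
  calc (1 / 6) * ((1 : ℝ) / n - 1 / m) ^ (1 + ε) ≤ ((1 : ℝ) / n - 1 / m) ^ (1 + ε) := by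
        linarith [rpow_nonneg hx.le (1 + ε)]
    _ ≤ _ := key.trans (le_abs_self _)
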